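/- Let k ≥ 3, q ≥ 1, π ∈ 𝕊_{k−1}, and let C = {a₁,…,a_t} with t ≥ 2 be a good set for π. Then the number of vertices x ∈ W^π_{k,q} that receive the color 0 under the distance coloring determined by C equals Σ_{d=0}^{q−|S(π)|−1} X^t_d · C(k+q−|S(π)|−t−2−d, k−t−1), where X^t_m denotes the number of t-tuples (d₁,…,d_t) of nonnegative integers with d₁+⋯+d_t = m in which at least two coordinates are equal to the maximal coordinate. -/

import Mathlib

open Finset

attribute [local instance] Classical.propDecidable

noncomputable section

/-- `π` is a permutation of `{1,…,k-1}` given in one-line notation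
(`π p` is the entry at position `p`), normalized to `0` outside `[1,k-1]`. -/
def OneLine (k : ℕ) (π : ℕ → ℕ) : Prop :=
  Set.BijOn π (Set.Icc 1 (k - 1)) (Set.Icc 1 (k - 1)) ∧
    ∀ p, p ∉ Set.Icc 1 (k - 1) → π p = 0

/-- The set `S(π)` of adjacent inversions of `π`:
those `i ∈ [1,k-2]` such that `i+1` appears before `i` in `π`. -/
def adjInvF (k : ℕ) (π : ℕ → ℕ) : Finset ℕ :=
  (Finset.Icc 1 (k - 2)).filter fun i =>
    ∃ p ∈ Finset.Icc 1 (k - 1), ∃ r ∈ Finset.Icc 1 (k - 1),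
      p < r ∧ π p = i + 1 ∧ π r = i

/-- `W^π_{k,q}`: weakly increasing `(k-1)`-tuples with entries in `[0,q-1]`
that are strictly increasing at every adjacent inversion of `π`
(vectors are functions `ℕ → ℕ` supported on `[1,k-1]`). -/
def W (k q : ℕ) (π : ℕ → ℕ) : Set (ℕ → ℕ) :=
  {v | (∀ i, i ∉ Finset.Icc 1 (k - 1) → v i = 0) ∧
       (∀ i ∈ Finset.Icc 1 (k - 1), v i ≤ q - 1) ∧
       (∀ i, 1 ≤ i → i + 1 ≤ k - 1 → v i ≤ v (i + 1)) ∧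
       (∀ i ∈ adjInvF k π, v i < v (i + 1))}

/-- `x + e_{π_a} + e_{π_{a+1}} + ⋯ + e_{π_{b-1}}`. -/
def shift (π : ℕ → ℕ) (a b : ℕ) (x : ℕ → ℕ) : ℕ → ℕ :=
  fun i => x i + if i ∈ (Finset.Icc a (b - 1)).image π then 1 else 0

/-- Adjacency in the graph `G^π_{k,q}`: one vertex is obtained from the other
by adding `e_{π_a} + ⋯ + e_{π_{b-1}}` for some `1 ≤ a < b ≤ k`. -/
def AdjRel (k : ℕ) (π : ℕ → ℕ) (x y : ℕ → ℕ) : Prop :=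
  ∃ a b, 1 ≤ a ∧ a < b ∧ b ≤ k ∧ (y = shift π a b x ∨ x = shift π a b y)

/-- The number of maximal blocks of consecutive integers of a finite set `T ⊆ ℕ`. -/
def numBlocks (T : Finset ℕ) : ℕ := (T.filter fun t => t + 1 ∉ T).card

/-- `cs_i(π)`: the number of pairs `1 ≤ a < b ≤ k` such that
`T_{a,b} = {π_a,…,π_{b-1}}` decomposes into exactly `i` maximal blocks
of consecutive integers. -/
def cs (k : ℕ) (π : ℕ → ℕ) (i : ℕ) : ℕ :=
  ((Finset.Icc 1 k ×ˢ Finset.Icc 1 k).filter fun p =>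
    p.1 < p.2 ∧ numBlocks ((Finset.Icc p.1 (p.2 - 1)).image π) = i).card

/-- For `i < j`, `{i,j}` is an edge of `G_π` iff `{i,i+1,…,j-1}` occurs as
a set of consecutive entries of `π`. -/
def GpiEdge (k : ℕ) (π : ℕ → ℕ) (i j : ℕ) : Prop :=
  ∃ a, 1 ≤ a ∧ a + (j - i) ≤ k ∧
    (Finset.Icc a (a + (j - i) - 1)).image π = Finset.Icc i (j - 1)

/-- Unordered adjacency in `G_π`. -/
def GpiAdjU (k : ℕ) (π : ℕ → ℕ) (i j : ℕ) : Prop :=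
  (i < j ∧ GpiEdge k π i j) ∨ (j < i ∧ GpiEdge k π j i)

/-- The position of the value `v` in the one-line notation of `π`. -/
def posOf (k : ℕ) (π : ℕ → ℕ) (v : ℕ) : ℕ :=
  if h : ((Finset.Icc 1 (k - 1)).filter fun t => π t = v).Nonempty then
    ((Finset.Icc 1 (k - 1)).filter fun t => π t = v).min' h
  else 0

/-- The rotation `r` on one-line permutations: if `π = π₁…π_{t-1}(k-1)π_{t+1}…π_{k-1}`,
then `r(π) = (π_{t+1}+1)…(π_{k-1}+1) 1 (π₁+1)…(π_{t-1}+1)`. -/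
def rot (k : ℕ) (π : ℕ → ℕ) : ℕ → ℕ := fun p =>
  if p ∉ Finset.Icc 1 (k - 1) then 0
  else if p < k - posOf k π (k - 1) then π (posOf k π (k - 1) + p) + 1
  else if p = k - posOf k π (k - 1) then 1
  else π (p - (k - posOf k π (k - 1))) + 1

/-- The reflection `s` on one-line permutations: if `π = π₁…π_{i-1} 1 π_{i+1}…π_{k-1}`,
then `s(π) = (k+1-π_{i-1})…(k+1-π₁) 1 (k+1-π_{k-1})…(k+1-π_{i+1})`. -/
def srefl (k : ℕ) (π : ℕ → ℕ) : ℕ → ℕ := fun p =>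
  if p ∉ Finset.Icc 1 (k - 1) then 0
  else if p < posOf k π 1 then k + 1 - π (posOf k π 1 - p)
  else if p = posOf k π 1 then 1
  else k + 1 - π (k + posOf k π 1 - p)

/-- The rotation `ρ` of the vertex set `{1,…,k}`. -/
def rotV (k i : ℕ) : ℕ := if i < k then i + 1 else 1

/-- The reflection `σ` of the vertex set `{1,…,k}`. -/
def sreflV (k i : ℕ) : ℕ := if i = 1 then 1 else k + 2 - i

/-- The maximal sorted family `(S₁,…,S_k)` associated with `σ`, `0`-indexed:
`sortedFam k σ (i-1) = S_i`. -/
def sortedFam (k : ℕ) (σ : ℕ → ℕ) : ℕ → Finset ℕ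
  | 0 => insert 1 ((adjInvF k σ).image (· + 1))
  | j + 1 => insert (σ (j + 1) + 1) ((sortedFam k σ j).erase (σ (j + 1)))

/-- `ear(π)`. -/
def ear (k : ℕ) (π : ℕ → ℕ) : ℕ :=
  ((Finset.Icc 1 (k - 2)).filter fun i => π (i + 1) = π i + 1 ∨ π i = π (i + 1) + 1).card
    + (({1, k - 1} : Finset ℕ) ∩ ({π 1, π (k - 1)} : Finset ℕ)).card

/-- `ε_i(π) = 1` if `i-1 ∈ S(π)` and `0` otherwise. -/
def eps (k : ℕ) (π : ℕ → ℕ) (i : ℕ) : ℕ := if i - 1 ∈ adjInvF k π then 1 else 0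

/-- Extension of a vector with the conventions `x_k = q-1` (`x₀ = 0` holds by
the normalization of vectors in `W^π_{k,q}`). -/
def xext (k q : ℕ) (x : ℕ → ℕ) (i : ℕ) : ℕ := if i = k then q - 1 else x i

/-- The label list `L^π(x) = {i ∈ [1,k] : x_{i-1} < x_i - ε_i(π)}`. -/
def labels (k q : ℕ) (π : ℕ → ℕ) (x : ℕ → ℕ) : Finset ℕ :=
  (Finset.Icc 1 k).filter fun i => xext k q x (i - 1) + eps k π i < xext k q x i

/-- A Sperner labeling of `G^π_{k,q}`. -/
def IsSperner (k q : ℕ) (π : ℕ → ℕ) (f : (ℕ → ℕ) → ℕ) : Prop :=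
  (∀ x ∈ W k q π, f x = 0 ∨ f x ∈ labels k q π x) ∧
  (∀ x ∈ W k q π, ∀ y ∈ W k q π, AdjRel k π x y → f x = f y ∨ f x = 0 ∨ f y = 0)

/-- The entry `w` appears between the entries `u` and `v` in `π`. -/
def Between (k : ℕ) (π : ℕ → ℕ) (u v w : ℕ) : Prop :=
  (posOf k π u < posOf k π w ∧ posOf k π w < posOf k π v) ∨
  (posOf k π v < posOf k π w ∧ posOf k π w < posOf k π u)

/-- A good set of colors for `π`. -/
def GoodSet (k : ℕ) (π : ℕ → ℕ) (C : Finset ℕ) : Prop :=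
  C ⊆ Finset.Icc 1 k ∧
  (∀ i ∈ C, ∀ j ∈ C, i ≠ j → ¬ GpiAdjU k π i j) ∧
  (∀ a ∈ C, ∀ b ∈ C, 1 < a → a < b → b < k →
      ((Between k π (a - 1) b a ∨ Between k π (a - 1) b (b - 1)) ∧
       (Between k π (b - 1) a (a - 1) ∨ Between k π (b - 1) a b))) ∧
  (1 ∈ C → ∀ b ∈ C, b ≠ 1 → Between k π 1 (b - 1) b) ∧
  (k ∈ C → ∀ b ∈ C, b ≠ k → Between k π b (k - 1) (b - 1))

/-- `x_a - x_{a-1} - ε_a(π)`, the `a`-th coordinate of the distance map `D`. -/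
def dval (k q : ℕ) (π : ℕ → ℕ) (x : ℕ → ℕ) (a : ℕ) : ℕ :=
  xext k q x a - xext k q x (a - 1) - eps k π a

/-- The distance coloring determined by a set of colors `C`:
`x` gets color `a ∈ C` if `dval x a` is the unique maximum of `dval x` on `C`,
and `0` otherwise. -/
def dcol (k q : ℕ) (π : ℕ → ℕ) (C : Finset ℕ) (x : ℕ → ℕ) : ℕ :=
  if h : ∃ a ∈ C, ∀ b ∈ C, b ≠ a → dval k q π x b < dval k q π x a then h.choose else 0

/-- `X^t_m`: the number of `t`-tuples of nonnegative integers summing to `m`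
having at least two coordinates equal to the maximal coordinate. -/
def Xcount (t m : ℕ) : ℕ :=
  ((Finset.Nat.antidiagonalTuple t m).filter fun d =>
    ∃ i j : Fin t, i ≠ j ∧ (∀ l, d l ≤ d i) ∧ d j = d i).card

/-!
The distance map `x ↦ (x_a - x_{a-1} - ε_a(π))_{1 ≤ a ≤ k}` is a bijection from `W^π_{k,q}` onto
the compositions of `q - 1 - |S(π)|` into `k` nonnegative parts, inverted by partial sums, and `x`
has colour `0` exactly when the parts indexed by `C` have no unique maximum. Such a composition
splits into its `C`-part, of some total `d` and without unique maximum (`X^t_d` choices), and the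
remaining `k - t` parts, which sum to `q - 1 - |S(π)| - d` (stars and bars). Here `t < k`, since
`1` and `2` are always adjacent in `G_π` and `C` is independent.
-/

section Counting

variable {ι : Type*} [DecidableEq ι] {s t : Finset ι}

theorem card_piAntidiag_nat_eq_choose (s : Finset ι) (n : ℕ) :
    #(piAntidiag s n) = (#s + n - 1).choose n := by
  rw [← card_finsuppAntidiag_nat_eq_choose, finsuppAntidiag, card_map, card_attach]

lemma sum_piecewise_zero_self (s : Finset ι) (f : ι → ℕ) : s.sum (s.piecewise f 0) = s.sum f :=
  sum_congr rfl fun _ hi => piecewise_eq_of_mem _ _ _ hi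

lemma piecewise_zero_mem_piAntidiag (s : Finset ι) (f : ι → ℕ) :
    s.piecewise f 0 ∈ piAntidiag s (s.sum f) := by
  refine mem_piAntidiag.2 ⟨sum_piecewise_zero_self s f, fun i hi => ?_⟩
  by_contra h
  exact hi (piecewise_eq_of_notMem _ _ _ h)

lemma piecewise_add_piecewise_of_mem_piAntidiag (hst : Disjoint s t) {f : ι → ℕ} {n : ℕ}
    (hf : f ∈ piAntidiag (s ∪ t) n) : s.piecewise f 0 + t.piecewise f 0 = f := by
  funext i
  by_cases his : i ∈ s
  · simp [his, disjoint_left.1 hst his]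
  by_cases hit : i ∈ t
  · simp [his, hit]
  · have := not_imp_comm.1 ((mem_piAntidiag.1 hf).2 i) (by simp [his, hit])
    simp [his, hit, this]

lemma piecewise_add_eq_left (hst : Disjoint s t) {u v : ι → ℕ} {m n : ℕ}
    (hu : u ∈ piAntidiag s m) (hv : v ∈ piAntidiag t n) : s.piecewise (u + v) 0 = u := by
  funext i
  by_cases hi : i ∈ s
  · rw [piecewise_eq_of_mem _ _ _ hi, Pi.add_apply,
      not_imp_comm.1 ((mem_piAntidiag.1 hv).2 i) (disjoint_left.1 hst hi), add_zero]
  · rw [piecewise_eq_of_notMem _ _ _ hi, not_imp_comm.1 ((mem_piAntidiag.1 hu).2 i) hi,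
      Pi.zero_apply]

lemma add_mem_piAntidiag_union (hst : Disjoint s t) {u v : ι → ℕ} {m n : ℕ}
    (hu : u ∈ piAntidiag s m) (hv : v ∈ piAntidiag t n) : u + v ∈ piAntidiag (s ∪ t) (m + n) := by
  have hsu := piecewise_add_eq_left hst hu hv
  have htv : t.piecewise (v + u) 0 = v := piecewise_add_eq_left hst.symm hv hu
  refine mem_piAntidiag.2 ⟨?_, fun i hi => ?_⟩
  · rw [sum_union hst, ← sum_piecewise_zero_self s, hsu, ← sum_piecewise_zero_self t, add_comm u,
      htv, (mem_piAntidiag.1 hu).1, (mem_piAntidiag.1 hv).1]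
  · by_contra h
    rw [mem_union, not_or] at h
    exact hi (by simp [not_imp_comm.1 ((mem_piAntidiag.1 hu).2 i) h.1,
      not_imp_comm.1 ((mem_piAntidiag.1 hv).2 i) h.2])

theorem card_filter_piAntidiag_union (hst : Disjoint s t)
    {P : (ι → ℕ) → Prop} [DecidablePred P] (hP : ∀ f g, Set.EqOn f g s → (P f ↔ P g)) (n : ℕ) :
    #{f ∈ piAntidiag (s ∪ t) n | P f}
      = ∑ m ∈ range (n + 1), #{u ∈ piAntidiag s m | P u} * #(piAntidiag t (n - m)) := by
  have hPs : ∀ f, P (s.piecewise f 0) ↔ P f :=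
    fun f => hP _ _ fun i hi => piecewise_eq_of_mem _ _ _ hi
  simp_rw [← card_product]
  rw [← card_sigma]
  refine card_nbij' (fun f => ⟨s.sum f, (s.piecewise f 0, t.piecewise f 0)⟩)
    (fun p => p.2.1 + p.2.2) ?_ ?_ ?_ ?_
  · intro f hf
    rw [coe_filter, Set.mem_ofPred_eq] at hf
    have hsum := (mem_piAntidiag.1 hf.1).1
    rw [sum_union hst] at hsum
    eta_reduce at hsum
    simp only [coe_sigma, Set.mem_sigma_iff, coe_range, Set.mem_Iio, coe_product, Set.mem_prod,
      coe_filter, Set.mem_ofPred_eq, mem_coe]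
    refine ⟨by omega, ⟨piecewise_zero_mem_piAntidiag s f, (hPs f).2 hf.2⟩, ?_⟩
    convert piecewise_zero_mem_piAntidiag t f using 2
    omega
  · rintro ⟨m, u, v⟩ hp
    simp only [coe_sigma, Set.mem_sigma_iff, coe_range, Set.mem_Iio, coe_product, Set.mem_prod,
      coe_filter, Set.mem_ofPred_eq, mem_coe] at hp
    obtain ⟨hm, ⟨hu, hPu⟩, hv⟩ := hp
    rw [coe_filter, Set.mem_ofPred_eq, ← hPs, piecewise_add_eq_left hst hu hv,
      show n = m + (n - m) by omega]
    exact ⟨add_mem_piAntidiag_union hst hu hv, hPu⟩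
  · intro f hf
    exact piecewise_add_piecewise_of_mem_piAntidiag hst (mem_filter.1 hf).1
  · rintro ⟨m, u, v⟩ hp
    simp only [coe_sigma, Set.mem_sigma_iff, coe_range, Set.mem_Iio, coe_product, Set.mem_prod,
      coe_filter, Set.mem_ofPred_eq, mem_coe] at hp
    obtain ⟨-, ⟨hu, -⟩, hv⟩ := hp
    have hsu := piecewise_add_eq_left hst hu hv
    have htv : t.piecewise (u + v) 0 = v := by
      rw [add_comm]; exact piecewise_add_eq_left hst.symm hv hu
    have hsum : s.sum (u + v) = m := by
      rw [← sum_piecewise_zero_self, hsu, (mem_piAntidiag.1 hu).1]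
    simp only [hsum, hsu, htv]

end Counting

section UniqueMax

variable {ι α : Type*} [LinearOrder α]

def HasUniqueMaxOn (s : Finset ι) (f : ι → α) : Prop :=
  ∃ a ∈ s, ∀ b ∈ s, b ≠ a → f b < f a

lemma hasUniqueMaxOn_congr {s : Finset ι} {f g : ι → α} (h : Set.EqOn f g s) :
    HasUniqueMaxOn s f ↔ HasUniqueMaxOn s g := by
  unfold HasUniqueMaxOn
  refine exists_congr fun a => and_congr_right fun ha =>
    forall_congr' fun b => imp_congr_right fun hb => ?_
  rw [h (mem_coe.2 ha), h (mem_coe.2 hb)]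

lemma hasUniqueMaxOn_iff_of_equiv {κ : Type*} {s : Finset ι} (e : κ ≃ s) (f : ι → α) :
    HasUniqueMaxOn s f ↔ ∃ i, ∀ j, j ≠ i → f (e j) < f (e i) := by
  constructor
  · rintro ⟨a, ha, H⟩
    refine ⟨e.symm ⟨a, ha⟩, fun j hj => ?_⟩
    rw [Equiv.apply_symm_apply]
    refine H _ (e j).2 fun hja => hj ?_
    rw [Equiv.eq_symm_apply]
    exact Subtype.ext hja
  · rintro ⟨i, H⟩
    refine ⟨e i, (e i).2, fun b hb hbi => ?_⟩
    obtain ⟨j, hj⟩ := e.surjective ⟨b, hb⟩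
    rw [show b = e j by rw [hj]]
    exact H j fun hji => hbi (by rw [← hji, hj])

lemma not_exists_forall_ne_lt_iff {κ : Type*} [Fintype κ] [Nonempty κ] (d : κ → α) :
    (¬∃ i, ∀ j, j ≠ i → d j < d i) ↔ ∃ i j, i ≠ j ∧ (∀ l, d l ≤ d i) ∧ d j = d i := by
  constructor
  · intro h
    obtain ⟨i, hi⟩ := Finite.exists_max d
    push Not at h
    obtain ⟨j, hji, hij⟩ := h i
    exact ⟨i, j, hji.symm, hi, le_antisymm (hi j) hij⟩
  · rintro ⟨i, j, hij, hmax, heq⟩ ⟨a, ha⟩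
    by_cases hai : a = i
    · subst hai
      exact (ha j hij.symm).ne heq
    · exact (ha i (Ne.symm hai)).not_ge (hmax a)

theorem card_filter_not_hasUniqueMaxOn_piAntidiag [DecidableEq ι] {s : Finset ι}
    (hs : s.Nonempty) (m : ℕ) :
    #{u ∈ piAntidiag s m | ¬HasUniqueMaxOn s u} = Xcount #s m := by
  have : Nonempty (Fin #s) := ⟨⟨0, hs.card_pos⟩⟩
  let e := s.equivFin
  let extend : (Fin #s → ℕ) → ι → ℕ := fun d x => if h : x ∈ s then d (e ⟨x, h⟩) else 0
  have extend_symm : ∀ d l, extend d (e.symm l) = d l := fun d l => by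
    simp [extend]
  have key := fun u : ι → ℕ => hasUniqueMaxOn_iff_of_equiv e.symm u
  refine card_nbij' (fun u l => u (e.symm l)) extend ?_ ?_ ?_ ?_
  · intro u hu
    simp only [coe_filter, mem_piAntidiag, Set.mem_ofPred_eq, key] at hu
    simp only [coe_filter, Nat.mem_antidiagonalTuple, Set.mem_ofPred_eq]
    refine ⟨?_, (not_exists_forall_ne_lt_iff _).1 hu.2⟩
    rw [e.symm.sum_comp (fun x : s => u x), sum_coe_sort s u, hu.1.1]
  · intro d hd
    simp only [coe_filter, Nat.mem_antidiagonalTuple, Set.mem_ofPred_eq] at hd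
    simp only [coe_filter, mem_piAntidiag, Set.mem_ofPred_eq, key, extend_symm]
    refine ⟨⟨?_, fun x hx => ?_⟩, (not_exists_forall_ne_lt_iff d).2 hd.2⟩
    · rw [← sum_coe_sort s, ← hd.1, ← e.sum_comp]
      exact sum_congr rfl fun x _ => dif_pos x.2
    · by_contra h
      exact hx (dif_neg h)
  · intro u hu
    simp only [coe_filter, mem_piAntidiag, Set.mem_ofPred_eq] at hu
    funext x
    by_cases hx : x ∈ s
    · simp [extend, hx]
    · simp [extend, hx, not_imp_comm.1 (hu.1.2 x) hx]
  · intro d _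
    funext l
    exact extend_symm d l

end UniqueMax

section DistanceMap

variable {k q : ℕ} {π : ℕ → ℕ} {x f : ℕ → ℕ}

lemma adjInvF_subset : adjInvF k π ⊆ Icc 1 (k - 2) := by
  intro i hi
  simp only [adjInvF, mem_filter] at hi
  exact hi.1

lemma eps_self : eps k π k = 0 :=
  if_neg fun h => by have := mem_Icc.1 (adjInvF_subset h); omega

lemma eps_succ_of_mem {i : ℕ} (hi : i ∈ adjInvF k π) : eps k π (i + 1) = 1 :=
  if_pos (by simpa using hi)

lemma sum_eps : ∑ i ∈ Icc 1 k, eps k π i = #(adjInvF k π) := by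
  have h : {i ∈ Icc 1 k | i - 1 ∈ adjInvF k π} = (adjInvF k π).map (addRightEmbedding 1) := by
    ext i
    simp only [mem_filter, mem_Icc, mem_map, addRightEmbedding_apply]
    constructor
    · rintro ⟨hi, hS⟩
      exact ⟨i - 1, hS, by omega⟩
    · rintro ⟨j, hj, rfl⟩
      have := mem_Icc.1 (adjInvF_subset hj)
      exact ⟨by omega, by simpa using hj⟩
  simp only [eps]
  rw [sum_boole, Nat.cast_id, h, card_map]

lemma xext_of_ne {i : ℕ} (h : i ≠ k) : xext k q x i = x i := if_neg h

lemma xext_self : xext k q x k = q - 1 := if_pos rfl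

lemma xext_add_eps_le (hx : x ∈ W k q π) {j : ℕ} (hj : j + 1 ≤ k) :
    xext k q x j + eps k π (j + 1) ≤ xext k q x (j + 1) := by
  obtain ⟨hsupp, hbound, hmono, hstrict⟩ := hx
  rw [xext_of_ne (by omega)]
  rcases hj.eq_or_lt with hjk | hjk
  · rw [← hjk, eps_self, xext_self]
    by_cases hj0 : j = 0
    · simp [hj0, hsupp 0 (by simp)]
    · exact hbound j (mem_Icc.2 ⟨by omega, by omega⟩)
  rw [xext_of_ne hjk.ne]
  by_cases hS : j ∈ adjInvF k π
  · rw [eps_succ_of_mem hS]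
    exact hstrict j hS
  · rw [show eps k π (j + 1) = 0 from if_neg (by simpa using hS), add_zero]
    by_cases hj0 : j = 0
    · simp [hj0, hsupp 0 (by simp)]
    · exact hmono j (by omega) (by omega)

lemma sum_Icc_dval_add_eps (hk : 0 < k) (hx : x ∈ W k q π) {m : ℕ} (hm : m ≤ k) :
    ∑ i ∈ Icc 1 m, (dval k q π x i + eps k π i) = xext k q x m := by
  induction m with
  | zero => simp [xext_of_ne hk.ne, hx.1 0 (by simp)]
  | succ m ih =>
    rw [sum_Icc_succ_top (by omega), ih (by omega)]
    have := xext_add_eps_le hx hm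
    simp only [dval, Nat.add_sub_cancel]
    omega

lemma sum_Icc_dval (hk : 0 < k) (hx : x ∈ W k q π) :
    ∑ i ∈ Icc 1 k, dval k q π x i + #(adjInvF k π) = q - 1 := by
  rw [← sum_eps, ← sum_add_distrib, sum_Icc_dval_add_eps hk hx le_rfl, xext_self]

def distVec (k q : ℕ) (π x : ℕ → ℕ) : ℕ → ℕ := (Icc 1 k).piecewise (dval k q π x) 0

def ofDistVec (k : ℕ) (π f : ℕ → ℕ) : ℕ → ℕ := fun i =>
  if i ∈ Icc 1 (k - 1) then ∑ j ∈ Icc 1 i, (f j + eps k π j) else 0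

lemma distVec_mem_piAntidiag (hk : 0 < k) (hx : x ∈ W k q π) :
    distVec k q π x ∈ piAntidiag (Icc 1 k) (q - 1 - #(adjInvF k π)) := by
  rw [distVec]
  convert piecewise_zero_mem_piAntidiag (Icc 1 k) (dval k q π x) using 2
  exact (Nat.eq_sub_of_add_eq (sum_Icc_dval hk hx)).symm

lemma ofDistVec_distVec (hk : 0 < k) (hx : x ∈ W k q π) :
    ofDistVec k π (distVec k q π x) = x := by
  funext i
  by_cases hi : i ∈ Icc 1 (k - 1)
  · have hik : i < k := by have := mem_Icc.1 hi; omega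
    rw [ofDistVec, if_pos hi, ← xext_of_ne (q := q) (x := x) hik.ne,
      ← sum_Icc_dval_add_eps hk hx hik.le]
    refine sum_congr rfl fun j hj => ?_
    rw [distVec, piecewise_eq_of_mem _ _ _ (Icc_subset_Icc_right hik.le hj)]
  · rw [ofDistVec, if_neg hi, hx.1 i hi]

section

variable (hf : ∑ i ∈ Icc 1 k, f i + #(adjInvF k π) = q - 1)
include hf

lemma xext_ofDistVec {m : ℕ} (hm : m ≤ k) :
    xext k q (ofDistVec k π f) m = ∑ j ∈ Icc 1 m, (f j + eps k π j) := by
  rcases hm.eq_or_lt with rfl | hmk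
  · rw [xext_self, sum_add_distrib, sum_eps, hf]
  rw [xext_of_ne hmk.ne, ofDistVec]
  split_ifs with hm
  · rfl
  · rw [show m = 0 by simp at hm; omega]
    rfl

lemma ofDistVec_mem_W : ofDistVec k π f ∈ W k q π := by
  have hval : ∀ i, i < k → ofDistVec k π f i = ∑ j ∈ Icc 1 i, (f j + eps k π j) :=
    fun i hi => by rw [← xext_ofDistVec hf hi.le, xext_of_ne hi.ne]
  have hmono : Monotone fun m => ∑ j ∈ Icc 1 m, (f j + eps k π j) :=
    fun a b hab => sum_le_sum_of_subset (Icc_subset_Icc_right hab)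
  refine ⟨fun i hi => if_neg hi, fun i hi => ?_, fun i _ hi => ?_, fun i hi => ?_⟩
  · have := mem_Icc.1 hi
    calc ofDistVec k π f i = ∑ j ∈ Icc 1 i, (f j + eps k π j) := hval i (by omega)
      _ ≤ ∑ j ∈ Icc 1 k, (f j + eps k π j) := hmono (by omega)
      _ = q - 1 := by rw [← xext_ofDistVec hf le_rfl, xext_self]
  · rw [hval i (by omega), hval (i + 1) (by omega)]
    exact hmono (by omega)
  · have := mem_Icc.1 (adjInvF_subset hi)
    rw [hval i (by omega), hval (i + 1) (by omega), sum_Icc_succ_top (by omega),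
      eps_succ_of_mem hi]
    omega

lemma dval_ofDistVec {i : ℕ} (hi : i ∈ Icc 1 k) : dval k q π (ofDistVec k π f) i = f i := by
  obtain ⟨j, rfl⟩ : ∃ j, i = j + 1 := ⟨i - 1, by have := mem_Icc.1 hi; omega⟩
  have hjk : j + 1 ≤ k := (mem_Icc.1 hi).2
  rw [dval, xext_ofDistVec hf hjk, xext_ofDistVec hf (by omega), sum_Icc_succ_top (by omega)]
  simp

end

lemma distVec_ofDistVec (hf : f ∈ piAntidiag (Icc 1 k) (q - 1 - #(adjInvF k π)))
    (hq : #(adjInvF k π) < q) : distVec k q π (ofDistVec k π f) = f := by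
  rw [mem_piAntidiag] at hf
  have hsum : ∑ i ∈ Icc 1 k, f i + #(adjInvF k π) = q - 1 := by rw [hf.1]; omega
  funext i
  by_cases hi : i ∈ Icc 1 k
  · rw [distVec, piecewise_eq_of_mem _ _ _ hi, dval_ofDistVec hsum hi]
  · rw [distVec, piecewise_eq_of_notMem _ _ _ hi, not_imp_comm.1 (hf.2 i) hi, Pi.zero_apply]

theorem ncard_W_filter_dval_eq (hk : 0 < k) (hq : #(adjInvF k π) < q)
    {P : (ℕ → ℕ) → Prop} [DecidablePred P]
    (hP : ∀ f g, Set.EqOn f g (Icc 1 k) → (P f ↔ P g)) :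
    {x | x ∈ W k q π ∧ P (dval k q π x)}.ncard
      = #{f ∈ piAntidiag (Icc 1 k) (q - 1 - #(adjInvF k π)) | P f} := by
  have hD : ∀ x, P (dval k q π x) ↔ P (distVec k q π x) :=
    fun x => hP _ _ fun i hi => (piecewise_eq_of_mem _ _ _ hi).symm
  rw [← Set.ncard_coe_finset]
  refine Set.ncard_congr (fun x _ => distVec k q π x) ?_ ?_ ?_
  · rintro x ⟨hx, hPx⟩
    simp only [coe_filter, Set.mem_ofPred_eq]
    exact ⟨distVec_mem_piAntidiag hk hx, (hD x).1 hPx⟩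
  · rintro x y ⟨hx, -⟩ ⟨hy, -⟩ hxy
    rw [← ofDistVec_distVec hk hx, hxy, ofDistVec_distVec hk hy]
  · intro f hf
    simp only [coe_filter, Set.mem_ofPred_eq] at hf
    have hsum : ∑ i ∈ Icc 1 k, f i + #(adjInvF k π) = q - 1 := by
      rw [(mem_piAntidiag.1 hf.1).1]; omega
    have hdist := distVec_ofDistVec hf.1 hq
    exact ⟨ofDistVec k π f, ⟨ofDistVec_mem_W hsum, by rw [hD, hdist]; exact hf.2⟩, hdist⟩

end DistanceMap

section GoodSet

variable {k q : ℕ} {π : ℕ → ℕ} {C : Finset ℕ}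

lemma gpiEdge_one_two (hπ : OneLine k π) (hk : 2 ≤ k) : GpiEdge k π 1 2 := by
  obtain ⟨a, ha, hπa⟩ := hπ.1.surjOn (Set.mem_Icc.2 ⟨le_rfl, by omega⟩ : 1 ∈ Set.Icc 1 (k - 1))
  refine ⟨a, ha.1, by have := ha.2; omega, ?_⟩
  simp [hπa]

lemma GoodSet.card_lt (hC : GoodSet k π C) (hπ : OneLine k π) (hk : 2 ≤ k) : #C < k := by
  by_contra! h
  have hCeq : C = Icc 1 k := eq_of_subset_of_card_le hC.1 (by simpa using h)
  exact hC.2.1 1 (by simp [hCeq]; omega) 2 (by simp [hCeq]; omega) (by norm_num)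
    (Or.inl ⟨by norm_num, gpiEdge_one_two hπ hk⟩)

lemma dcol_eq_zero_iff (h0 : 0 ∉ C) (x : ℕ → ℕ) :
    dcol k q π C x = 0 ↔ ¬HasUniqueMaxOn C (dval k q π x) := by
  unfold dcol
  split_ifs with h
  · exact iff_of_false (fun h' => h0 (h' ▸ h.choose_spec.1)) (not_not.2 h)
  · exact iff_of_true rfl h

end GoodSet

theorem stmt17_general (k q : ℕ) (hq : 1 ≤ q) (π : ℕ → ℕ) (hπ : OneLine k π)
    (C : Finset ℕ) (hC2 : 2 ≤ C.card) (hC : GoodSet k π C) :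
    {x | x ∈ W k q π ∧ dcol k q π C x = 0}.ncard
      = ∑ d ∈ Finset.range (q - (adjInvF k π).card),
          Xcount C.card d *
            Nat.choose (k + q - (adjInvF k π).card - C.card - 2 - d) (k - C.card - 1) := by
  have hCk : C ⊆ Icc 1 k := hC.1
  have hk : 2 ≤ k := by simpa using hC2.trans (card_le_card hCk)
  have htk := hC.card_lt hπ hk
  have hCne : C.Nonempty := card_pos.1 (by omega)
  have hzero : {x | x ∈ W k q π ∧ dcol k q π C x = 0}
      = {x | x ∈ W k q π ∧ ¬HasUniqueMaxOn C (dval k q π x)} := by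
    simp only [dcol_eq_zero_iff fun h => by simpa using hCk h]
  rcases lt_or_ge #(adjInvF k π) q with hs | hs
  · rw [hzero, ncard_W_filter_dval_eq (P := fun f => ¬HasUniqueMaxOn C f) (by omega) hs
        fun f g h => not_congr (hasUniqueMaxOn_congr (h.mono hCk)),
      ← union_sdiff_of_subset hCk,
      card_filter_piAntidiag_union disjoint_sdiff fun f g h => not_congr (hasUniqueMaxOn_congr h),
      show q - 1 - #(adjInvF k π) + 1 = q - #(adjInvF k π) by omega]
    refine sum_congr rfl fun m hm => ?_
    have := mem_range.1 hm
    rw [card_filter_not_hasUniqueMaxOn_piAntidiag hCne,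
      card_piAntidiag_nat_eq_choose, card_sdiff_of_subset hCk, Nat.card_Icc,
      show k + 1 - 1 - #C + (q - 1 - #(adjInvF k π) - m) - 1
        = k - #C - 1 + (q - 1 - #(adjInvF k π) - m) by omega, ← Nat.choose_symm_add]
    congr 2
    omega
  · have hempty : {x | x ∈ W k q π ∧ dcol k q π C x = 0} = ∅ :=
      Set.eq_empty_of_forall_notMem fun x ⟨hx, _⟩ => by
        have := sum_Icc_dval (by omega) hx
        omega
    rw [hempty, Set.ncard_empty, Nat.sub_eq_zero_of_le hs, range_zero, sum_empty]

theorem stmt17 (k q : ℕ) (hk : 3 ≤ k) (hq : 1 ≤ q) (π : ℕ → ℕ) (hπ : OneLine k π)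
    (C : Finset ℕ) (hC2 : 2 ≤ C.card) (hC : GoodSet k π C) :
    {x | x ∈ W k q π ∧ dcol k q π C x = 0}.ncard
      = ∑ d ∈ Finset.range (q - (adjInvF k π).card),
          Xcount C.card d *
            Nat.choose (k + q - (adjInvF k π).card - C.card - 2 - d) (k - C.card - 1) :=
  stmt17_general k q hq π hπ C hC2 hC

end
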